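/- Fix a real number c with 0 < c < 1, and define g: [0,3-2c] × ℝ_{≥0} → ℝ as follows. For 0 ≤ u ≤ 2-c: g(u,v) = v/2 if 0 ≤ v ≤ 2-2c; g(u,v) = 1-c if 2-2c ≤ v ≤ 6-4c-2u; g(u,v) = (8-6c-2u-v)/2 if 6-4c-2u ≤ v ≤ 8-6c-2u. For 2-c ≤ u ≤ 3-2c: g(u,v) = v/2 if 0 ≤ v ≤ 6-4c-2u; g(u,v) = 3-2c-u if 6-4c-2u ≤ v ≤ 2-2c; g(u,v) = (8-6c-2u-v)/2 if 2-2c ≤ v ≤ 8-6c-2u. Then (3/(6(1-c)(3-2c)^2)) * ∫_0^{3-2c} ∫_0^{8-6c-2u} g(u,v)^2 dv du = 1 - c - (1-c)(31c^2 - 90c + 65)/(12(3-2c)^2). -/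

import Mathlib

open MeasureTheory Set

/-!
For fixed `u`, the function `v ↦ g u v` is piecewise linear: a ramp of slope `1/2`, a plateau and
a ramp of slope `-1/2`, so its square integrates to a piecewise polynomial in `u`, which is then
integrated over the two ranges of `u`.
-/

section Piecewise

variable {f f₁ f₂ f₃ : ℝ → ℝ} {a b c d : ℝ}

theorem intervalIntegrable_of_eqOn_Icc (hab : a ≤ b) (h₁ : Continuous f₁)
    (e₁ : EqOn f f₁ (Icc a b)) : IntervalIntegrable f volume a b :=
  (h₁.continuousOn.congr e₁).intervalIntegrable_of_Icc hab

theorem integral_eq_of_eqOn_Icc (hab : a ≤ b) (e₁ : EqOn f f₁ (Icc a b)) :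
    ∫ x in a..b, f x = ∫ x in a..b, f₁ x :=
  intervalIntegral.integral_congr (by rwa [uIcc_of_le hab])

theorem integral_eq_add_of_eqOn_Icc (hab : a ≤ b) (hbc : b ≤ c)
    (h₁ : Continuous f₁) (h₂ : Continuous f₂)
    (e₁ : EqOn f f₁ (Icc a b)) (e₂ : EqOn f f₂ (Icc b c)) :
    ∫ x in a..c, f x = (∫ x in a..b, f₁ x) + ∫ x in b..c, f₂ x := by
  rw [← intervalIntegral.integral_add_adjacent_intervals (intervalIntegrable_of_eqOn_Icc hab h₁ e₁)
      (intervalIntegrable_of_eqOn_Icc hbc h₂ e₂),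
    integral_eq_of_eqOn_Icc hab e₁, integral_eq_of_eqOn_Icc hbc e₂]

theorem integral_eq_add_add_of_eqOn_Icc (hab : a ≤ b) (hbc : b ≤ c) (hcd : c ≤ d)
    (h₁ : Continuous f₁) (h₂ : Continuous f₂) (h₃ : Continuous f₃)
    (e₁ : EqOn f f₁ (Icc a b)) (e₂ : EqOn f f₂ (Icc b c)) (e₃ : EqOn f f₃ (Icc c d)) :
    ∫ x in a..d, f x = (∫ x in a..b, f₁ x) + (∫ x in b..c, f₂ x) + ∫ x in c..d, f₃ x := by
  have hbd : IntervalIntegrable f volume b d :=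
    (intervalIntegrable_of_eqOn_Icc hbc h₂ e₂).trans (intervalIntegrable_of_eqOn_Icc hcd h₃ e₃)
  rw [← intervalIntegral.integral_add_adjacent_intervals (intervalIntegrable_of_eqOn_Icc hab h₁ e₁) hbd,
    integral_eq_of_eqOn_Icc hab e₁, integral_eq_add_of_eqOn_Icc hbc hcd h₂ h₃ e₂ e₃, add_assoc]

end Piecewise

theorem integral_div_two_sq (a b : ℝ) : ∫ x in a..b, (x / 2) ^ 2 = (b ^ 3 - a ^ 3) / 12 := by
  simp only [div_pow, intervalIntegral.integral_div, integral_pow]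
  ring

theorem integral_sub_pow (K a b : ℝ) (n : ℕ) :
    ∫ x in a..b, (K - x) ^ n = ((K - a) ^ (n + 1) - (K - b) ^ (n + 1)) / (n + 1) := by
  rw [intervalIntegral.integral_comp_sub_left (fun x => x ^ n) K, integral_pow]

theorem integral_add_mul_sub (A B K a b : ℝ) :
    ∫ x in a..b, (A + B * (K - x)) = (b - a) * A + B * ((K - a) ^ 2 - (K - b) ^ 2) / 2 := by
  rw [intervalIntegral.integral_add intervalIntegrable_const
      ((intervalIntegrable_const.sub intervalIntegral.intervalIntegrable_id).const_mul B),
    intervalIntegral.integral_const, intervalIntegral.integral_const_mul]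
  have h := integral_sub_pow K a b 1
  simp only [pow_one] at h
  rw [h, smul_eq_mul]
  ring

theorem integral_mul_sub_pow_sub_mul_sub_pow (A B K a b : ℝ) (m n : ℕ) :
    ∫ x in a..b, (A * (K - x) ^ m - B * (K - x) ^ n) =
      A * ((K - a) ^ (m + 1) - (K - b) ^ (m + 1)) / (m + 1) -
        B * ((K - a) ^ (n + 1) - (K - b) ^ (n + 1)) / (n + 1) := by
  rw [intervalIntegral.integral_sub (Continuous.intervalIntegrable (by fun_prop) _ _)
      (Continuous.intervalIntegrable (by fun_prop) _ _),
    intervalIntegral.integral_const_mul, intervalIntegral.integral_const_mul,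
    integral_sub_pow, integral_sub_pow, mul_div_assoc, mul_div_assoc]

theorem integral_sub_div_two_sq (K a b : ℝ) :
    ∫ x in a..b, ((K - x) / 2) ^ 2 = ((K - a) ^ 3 - (K - b) ^ 3) / 12 := by
  rw [intervalIntegral.integral_comp_sub_left (fun x => (x / 2) ^ 2) K, integral_div_two_sq]

section Fibre

variable {c : ℝ} {g : ℝ → ℝ → ℝ} {u : ℝ}

theorem integral_sq_fibre_of_le (hc1 : c < 1)
    (hg1 : ∀ u v, 0 ≤ u → u ≤ 2 - c → 0 ≤ v → v ≤ 2 - 2*c → g u v = v / 2)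
    (hg2 : ∀ u v, 0 ≤ u → u ≤ 2 - c → 2 - 2*c ≤ v → v ≤ 6 - 4*c - 2*u → g u v = 1 - c)
    (hg3 : ∀ u v, 0 ≤ u → u ≤ 2 - c → 6 - 4*c - 2*u ≤ v → v ≤ 8 - 6*c - 2*u →
      g u v = (8 - 6*c - 2*u - v) / 2)
    (hu0 : 0 ≤ u) (hu : u ≤ 2 - c) :
    ∫ v in (0:ℝ)..(8 - 6*c - 2*u), (g u v)^2 = 4 * (1 - c)^3 / 3 + 2 * (1 - c)^2 * (2 - c - u) := by
  rw [integral_eq_add_add_of_eqOn_Icc (f₁ := fun v => (v / 2) ^ 2) (f₂ := fun _ => (1 - c) ^ 2)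
      (f₃ := fun v => ((8 - 6*c - 2*u - v) / 2) ^ 2)
      (by linarith) (by linarith) (by linarith) (by fun_prop) (by fun_prop) (by fun_prop)
      (fun v hv => congrArg (· ^ 2) (hg1 u v hu0 hu hv.1 hv.2))
      (fun v hv => congrArg (· ^ 2) (hg2 u v hu0 hu hv.1 hv.2))
      (fun v hv => congrArg (· ^ 2) (hg3 u v hu0 hu hv.1 hv.2)),
    integral_div_two_sq, intervalIntegral.integral_const, integral_sub_div_two_sq, smul_eq_mul]
  ring

theorem integral_sq_fibre_of_ge
    (hg4 : ∀ u v, 2 - c ≤ u → u ≤ 3 - 2*c → 0 ≤ v → v ≤ 6 - 4*c - 2*u → g u v = v / 2)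
    (hg5 : ∀ u v, 2 - c ≤ u → u ≤ 3 - 2*c → 6 - 4*c - 2*u ≤ v → v ≤ 2 - 2*c →
      g u v = 3 - 2*c - u)
    (hg6 : ∀ u v, 2 - c ≤ u → u ≤ 3 - 2*c → 2 - 2*c ≤ v → v ≤ 8 - 6*c - 2*u →
      g u v = (8 - 6*c - 2*u - v) / 2)
    (hu : 2 - c ≤ u) (hu3 : u ≤ 3 - 2*c) :
    ∫ v in (0:ℝ)..(8 - 6*c - 2*u), (g u v)^2 =
      2 * (1 - c) * (3 - 2*c - u)^2 - 2 / 3 * (3 - 2*c - u)^3 := by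
  rw [integral_eq_add_add_of_eqOn_Icc (f₁ := fun v => (v / 2) ^ 2)
      (f₂ := fun _ => (3 - 2*c - u) ^ 2) (f₃ := fun v => ((8 - 6*c - 2*u - v) / 2) ^ 2)
      (by linarith) (by linarith) (by linarith) (by fun_prop) (by fun_prop) (by fun_prop)
      (fun v hv => congrArg (· ^ 2) (hg4 u v hu hu3 hv.1 hv.2))
      (fun v hv => congrArg (· ^ 2) (hg5 u v hu hu3 hv.1 hv.2))
      (fun v hv => congrArg (· ^ 2) (hg6 u v hu hu3 hv.1 hv.2)),
    integral_div_two_sq, intervalIntegral.integral_const, integral_sub_div_two_sq, smul_eq_mul]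
  ring

end Fibre

theorem stmt_6_general (c : ℝ) (hc1 : c < 1) (g : ℝ → ℝ → ℝ)
    (hg1 : ∀ u v, 0 ≤ u → u ≤ 2 - c → 0 ≤ v → v ≤ 2 - 2*c → g u v = v / 2)
    (hg2 : ∀ u v, 0 ≤ u → u ≤ 2 - c → 2 - 2*c ≤ v → v ≤ 6 - 4*c - 2*u → g u v = 1 - c)
    (hg3 : ∀ u v, 0 ≤ u → u ≤ 2 - c → 6 - 4*c - 2*u ≤ v → v ≤ 8 - 6*c - 2*u →
      g u v = (8 - 6*c - 2*u - v) / 2)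
    (hg4 : ∀ u v, 2 - c ≤ u → u ≤ 3 - 2*c → 0 ≤ v → v ≤ 6 - 4*c - 2*u → g u v = v / 2)
    (hg5 : ∀ u v, 2 - c ≤ u → u ≤ 3 - 2*c → 6 - 4*c - 2*u ≤ v → v ≤ 2 - 2*c →
      g u v = 3 - 2*c - u)
    (hg6 : ∀ u v, 2 - c ≤ u → u ≤ 3 - 2*c → 2 - 2*c ≤ v → v ≤ 8 - 6*c - 2*u →
      g u v = (8 - 6*c - 2*u - v) / 2) :
    (3 / (6 * (1 - c) * (3 - 2*c)^2)) *
      (∫ u in (0:ℝ)..(3 - 2*c), ∫ v in (0:ℝ)..(8 - 6*c - 2*u), (g u v)^2) =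
    1 - c - (1 - c) * (31*c^2 - 90*c + 65) / (12 * (3 - 2*c)^2) := by
  rw [integral_eq_add_of_eqOn_Icc (by linarith) (by linarith) (by fun_prop) (by fun_prop)
      (fun u hu => integral_sq_fibre_of_le hc1 hg1 hg2 hg3 hu.1 hu.2)
      (fun u hu => integral_sq_fibre_of_ge hg4 hg5 hg6 hu.1 hu.2),
    integral_add_mul_sub, integral_mul_sub_pow_sub_mul_sub_pow]
  have one_sub_c_pos : 0 < 1 - c := sub_pos.mpr hc1
  have three_sub_two_c_pos : 0 < 3 - 2 * c := by linarith
  rw [div_mul_eq_mul_div, div_eq_iff (by positivity)]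
  field_simp
  ring

theorem stmt_6 (c : ℝ) (hc0 : 0 < c) (hc1 : c < 1) (g : ℝ → ℝ → ℝ)
    (hg1 : ∀ u v, 0 ≤ u → u ≤ 2 - c → 0 ≤ v → v ≤ 2 - 2*c → g u v = v / 2)
    (hg2 : ∀ u v, 0 ≤ u → u ≤ 2 - c → 2 - 2*c ≤ v → v ≤ 6 - 4*c - 2*u → g u v = 1 - c)
    (hg3 : ∀ u v, 0 ≤ u → u ≤ 2 - c → 6 - 4*c - 2*u ≤ v → v ≤ 8 - 6*c - 2*u →
      g u v = (8 - 6*c - 2*u - v) / 2)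
    (hg4 : ∀ u v, 2 - c ≤ u → u ≤ 3 - 2*c → 0 ≤ v → v ≤ 6 - 4*c - 2*u → g u v = v / 2)
    (hg5 : ∀ u v, 2 - c ≤ u → u ≤ 3 - 2*c → 6 - 4*c - 2*u ≤ v → v ≤ 2 - 2*c →
      g u v = 3 - 2*c - u)
    (hg6 : ∀ u v, 2 - c ≤ u → u ≤ 3 - 2*c → 2 - 2*c ≤ v → v ≤ 8 - 6*c - 2*u →
      g u v = (8 - 6*c - 2*u - v) / 2) :
    (3 / (6 * (1 - c) * (3 - 2*c)^2)) *
      (∫ u in (0:ℝ)..(3 - 2*c), ∫ v in (0:ℝ)..(8 - 6*c - 2*u), (g u v)^2) =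
    1 - c - (1 - c) * (31*c^2 - 90*c + 65) / (12 * (3 - 2*c)^2) :=
  stmt_6_general c hc1 g hg1 hg2 hg3 hg4 hg5 hg6
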